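/- Under the cyclic coordinate PIGD setup, for every k ≥ 0 the following descent inequality holds: [F(x^k) + Σ_{i=1}^m (β_{k,i}/(2γ_{k,i}))‖x_i^k − x_i^{k−1}‖²] − [F(x^{k+1}) + Σ_{i=1}^m (β_{k+1,i}/(2γ_{k+1,i}))‖x_i^{k+1} − x_i^k‖²] ≥ ((1−c)·L̲/(2c))·‖x^{k+1} − x^k‖², where L̲ := min_{1≤i≤m} L_i. -/

import Mathlib

/-- The product space `∏ i, ℝ^{n i}` with the ℓ² product norm. -/
abbrev PIGDSpace (m : ℕ) (nn : Fin m → ℕ) :=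
  PiLp 2 fun i : Fin m => EuclideanSpace ℝ (Fin (nn i))

/-!
Each block update is a proximal step: optimality of the prox point and convexity of `gᵢ` give
`gᵢ(x⁺ᵢ) + ⟪∇ᵢf + (x⁺ᵢ - xᵢ)/γ - β(xᵢ - x⁻ᵢ)/γ, x⁺ᵢ - xᵢ⟫ ≤ gᵢ(xᵢ)`, while the descent lemma along
block `i` (blockwise `Lᵢ`-Lipschitz gradient) bounds the increase of `f` by
`⟪∇ᵢf, x⁺ᵢ - xᵢ⟫ + Lᵢ/2 ‖x⁺ᵢ - xᵢ‖²`. The gradient terms cancel; Young's inequality on the inertial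
term and telescoping over the intermediate points of the sweep leave the coefficient
`Lᵢ/2 - (2 - βₖ)/(2γₖ)` on `‖x⁺ᵢ - xᵢ‖²`. With `γ = 2(1 - β)c/L` and `βₖ₊₁ ≤ βₖ` this coefficient
plus `βₖ₊₁/(2γₖ₊₁)` is at most `-(1 - c)Lᵢ/(2c)`.
-/

open Set Function Filter Topology WithLp RealInnerProductSpace

lemma le_add_deriv_add_of_deriv_sub_le {φ φ' : ℝ → ℝ} {K : ℝ} (hφ : ∀ t, HasDerivAt φ (φ' t) t)
    (hK : ∀ t ∈ Ioo (0 : ℝ) 1, φ' t - φ' 0 ≤ K * t) : φ 1 ≤ φ 0 + φ' 0 + K / 2 := by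
  set ψ : ℝ → ℝ := fun t => φ t - t * φ' 0 - K * t ^ 2 / 2
  have hψ : ∀ t, HasDerivAt ψ (φ' t - φ' 0 - K * t) t := fun t => by
    refine (((hφ t).sub ((hasDerivAt_id t).mul_const (φ' 0))).sub
      (((hasDerivAt_pow 2 t).const_mul K).div_const 2)).congr_deriv ?_
    norm_num; ring
  have hψ_anti : AntitoneOn ψ (Icc 0 1) :=
    antitoneOn_of_hasDerivWithinAt_nonpos (convex_Icc 0 1)
      (fun t _ => (hψ t).continuousAt.continuousWithinAt) (fun t _ => (hψ t).hasDerivWithinAt)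
      (fun t ht => by rw [interior_Icc] at ht; linarith [hK t ht])
  have := hψ_anti (left_mem_Icc.2 zero_le_one) (right_mem_Icc.2 zero_le_one) zero_le_one
  simp only [ψ] at this
  linarith

section InnerProductSpace

variable {E : Type*} [NormedAddCommGroup E] [InnerProductSpace ℝ E]

lemma add_inner_div_le_of_isMinOn_prox {g : E → ℝ} (hg : ConvexOn ℝ univ g) {γ : ℝ} (hγ : 0 < γ)
    {w p : E} (hp : IsMinOn (fun z => ‖z - w‖ ^ 2 / (2 * γ) + g z) univ p) (z : E) :
    g p + ⟪w - p, z - p⟫ / γ ≤ g z := by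
  -- compare `p` with the convex combination `p + l • (z - p)`, then let `l → 0`
  have hslack : ∀ l ∈ Ioo (0 : ℝ) 1,
      g p + ⟪w - p, z - p⟫ / γ ≤ g z + l * (‖z - p‖ ^ 2 / (2 * γ)) := by
    rintro l ⟨hl0, hl1⟩
    have hmin := isMinOn_iff.1 hp (p + l • (z - p)) (mem_univ _)
    have hconv : g (p + l • (z - p)) ≤ (1 - l) * g p + l * g z := by
      have h := hg.2 (mem_univ p) (mem_univ z) (sub_nonneg.2 hl1.le) hl0.le (by ring)
      rwa [smul_eq_mul, smul_eq_mul, show (1 - l) • p + l • z = p + l • (z - p) by module] at h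
    have hnorm : ‖p + l • (z - p) - w‖ ^ 2
        = ‖p - w‖ ^ 2 + l * (2 * ⟪p - w, z - p⟫) + l * (l * ‖z - p‖ ^ 2) := by
      rw [show p + l • (z - p) - w = (p - w) + l • (z - p) by module, norm_add_sq_real,
        real_inner_smul_right, norm_smul, mul_pow, Real.norm_eq_abs, sq_abs]
      ring
    have hinner : ⟪w - p, z - p⟫ / γ = -(2 * (⟪p - w, z - p⟫ / (2 * γ))) := by
      rw [← neg_sub p w, inner_neg_left]; field_simp
    simp only [hnorm, add_div, mul_div_assoc] at hmin
    have h : 0 ≤ l * (g z + l * (‖z - p‖ ^ 2 / (2 * γ)) - (g p + ⟪w - p, z - p⟫ / γ)) := by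
      rw [hinner]; linarith
    linarith [(mul_nonneg_iff_of_pos_left hl0).1 h]
  have hlim : Tendsto (fun l : ℝ => g z + l * (‖z - p‖ ^ 2 / (2 * γ))) (𝓝[>] 0) (𝓝 (g z)) := by
    have hcont : Continuous fun l : ℝ => g z + l * (‖z - p‖ ^ 2 / (2 * γ)) := by fun_prop
    simpa using (hcont.tendsto 0).mono_left nhdsWithin_le_nhds
  exact ge_of_tendsto hlim (eventually_of_mem (Ioo_mem_nhdsGT one_pos) hslack)

lemma le_add_inner_add_of_hasGradientAt [CompleteSpace E] {f : E → ℝ} {f' : E → E}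
    (hf : ∀ x, HasGradientAt f (f' x) x) (u w : E) {K : ℝ}
    (hK : ∀ t ∈ Ioo (0 : ℝ) 1, ⟪f' (u + t • w) - f' u, w⟫ ≤ K * t) :
    f (u + w) ≤ f u + ⟪f' u, w⟫ + K / 2 := by
  have hφ : ∀ t : ℝ, HasDerivAt (fun s : ℝ => f (u + s • w)) ⟪f' (u + t • w), w⟫ t := fun t => by
    have hline : HasDerivAt (fun s : ℝ => u + s • w) w t := by
      simpa using ((hasDerivAt_id t).smul_const w).const_add u
    exact (hf (u + t • w)).hasFDerivAt.comp_hasDerivAt t hline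
  simpa using le_add_deriv_add_of_deriv_sub_le hφ (by simpa [inner_sub_left] using hK)

end InnerProductSpace

section PiLp

variable {ι : Type*} [DecidableEq ι] {E : ι → Type*} [∀ i, NormedAddCommGroup (E i)]
  [∀ i, InnerProductSpace ℝ (E i)]

lemma PiLp.add_smul_single (x : PiLp 2 E) (i : ι) (d : E i) (t : ℝ) :
    x + t • PiLp.single 2 i d = toLp 2 (update x i (x i + t • d)) := by
  ext j : 1
  by_cases h : j = i
  · subst h; simp
  · simp [Pi.single_eq_of_ne h, update_of_ne h]

variable [Fintype ι]

lemma PiLp.inner_single_right (a : PiLp 2 E) (i : ι) (d : E i) :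
    ⟪a, PiLp.single 2 i d⟫ = ⟪a i, d⟫ := by
  rw [PiLp.inner_apply, Finset.sum_eq_single i (fun j _ hj => by simp [Pi.single_eq_of_ne hj])
    (by simp), PiLp.single_eq_same]

variable [∀ i, CompleteSpace (E i)]

lemma block_descent {f : PiLp 2 E → ℝ} {f' : PiLp 2 E → PiLp 2 E}
    (hf : ∀ x, HasGradientAt f (f' x) x) (i : ι) {K : ℝ}
    (hlip : ∀ (x : PiLp 2 E) (u v : E i),
      ‖f' (toLp 2 (update x i u)) i - f' (toLp 2 (update x i v)) i‖ ≤ K * ‖u - v‖)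
    (x : PiLp 2 E) (v : E i) :
    f (toLp 2 (update x i v)) ≤ f x + ⟪f' x i, v - x i⟫ + K / 2 * ‖v - x i‖ ^ 2 := by
  set d := v - x i
  have hK : ∀ t ∈ Ioo (0 : ℝ) 1,
      ⟪f' (x + t • PiLp.single 2 i d) - f' x, PiLp.single 2 i d⟫ ≤ K * ‖d‖ ^ 2 * t := by
    rintro t ⟨ht, -⟩
    have hx : toLp 2 (update x i (x i)) = x := by simp
    calc ⟪f' (x + t • PiLp.single 2 i d) - f' x, PiLp.single 2 i d⟫
        = ⟪f' (toLp 2 (update x i (x i + t • d))) i - f' (toLp 2 (update x i (x i))) i, d⟫ := by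
          rw [PiLp.inner_single_right, PiLp.add_smul_single, hx]; rfl
      _ ≤ K * ‖(x i + t • d) - x i‖ * ‖d‖ :=
          (real_inner_le_norm _ _).trans (mul_le_mul_of_nonneg_right (hlip _ _ _) (norm_nonneg d))
      _ = K * ‖d‖ ^ 2 * t := by
          rw [add_sub_cancel_left, norm_smul, Real.norm_of_nonneg ht.le]; ring
  have h := le_add_inner_add_of_hasGradientAt hf x (PiLp.single 2 i d) hK
  rw [← one_smul ℝ (PiLp.single 2 i d), PiLp.add_smul_single, one_smul, one_smul,
    PiLp.inner_single_right, add_sub_cancel] at h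
  linarith

lemma inertial_block_prox_step_le {f : PiLp 2 E → ℝ} {f' : PiLp 2 E → PiLp 2 E}
    (hf : ∀ x, HasGradientAt f (f' x) x) (i : ι) {K : ℝ}
    (hlip : ∀ (x : PiLp 2 E) (u v : E i),
      ‖f' (toLp 2 (update x i u)) i - f' (toLp 2 (update x i v)) i‖ ≤ K * ‖u - v‖)
    {g : E i → ℝ} (hg : ConvexOn ℝ univ g) {γ β : ℝ} (hγ : 0 < γ) (hβ : 0 ≤ β)
    (x : PiLp 2 E) (x₀ p : E i)
    (hp : IsMinOn (fun z => ‖z - (x i - γ • f' x i + β • (x i - x₀))‖ ^ 2 / (2 * γ) + g z)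
      univ p) :
    f (toLp 2 (update x i p)) + g p ≤ f x + g (x i)
      + (K / 2 - 1 / γ + β / (2 * γ)) * ‖p - x i‖ ^ 2 + β / (2 * γ) * ‖x i - x₀‖ ^ 2 := by
  have hdesc := block_descent hf i hlip x p
  have hprox := add_inner_div_le_of_isMinOn_prox hg hγ hp (x i)
  set s := p - x i
  set d := x i - x₀
  have hinner : ⟪x i - γ • f' x i + β • d - p, x i - p⟫ / γ
      = ‖s‖ ^ 2 / γ + ⟪f' x i, s⟫ - β / γ * ⟪s, d⟫ := by
    rw [show x i - γ • f' x i + β • d - p = -(s + γ • f' x i - β • d) by module,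
      show x i - p = -s by module, inner_neg_neg, inner_sub_left, inner_add_left,
      real_inner_smul_left, real_inner_smul_left, real_inner_self_eq_norm_sq, real_inner_comm d]
    field_simp
  have hyoung : β / γ * ⟪s, d⟫ ≤ β / (2 * γ) * ‖s‖ ^ 2 + β / (2 * γ) * ‖d‖ ^ 2 := by
    have h : ⟪s, d⟫ ≤ (‖s‖ ^ 2 + ‖d‖ ^ 2) / 2 := by
      nlinarith [real_inner_le_norm s d, sq_nonneg (‖s‖ - ‖d‖)]
    calc β / γ * ⟪s, d⟫ ≤ β / γ * ((‖s‖ ^ 2 + ‖d‖ ^ 2) / 2) := by gcongr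
      _ = β / (2 * γ) * ‖s‖ ^ 2 + β / (2 * γ) * ‖d‖ ^ 2 := by ring
  have hexpand : (K / 2 - 1 / γ + β / (2 * γ)) * ‖s‖ ^ 2
      = K / 2 * ‖s‖ ^ 2 - ‖s‖ ^ 2 / γ + β / (2 * γ) * ‖s‖ ^ 2 := by ring
  linarith

end PiLp

section CyclicSweep

variable {m : ℕ} {E : Fin m → Type*}

def cyclicSweep (u v : PiLp 2 E) (j : ℕ) : PiLp 2 E :=
  toLp 2 fun l => if (l : ℕ) < j then v l else u l

@[simp]
lemma cyclicSweep_zero (u v : PiLp 2 E) : cyclicSweep u v 0 = u := by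
  ext l : 1; simp [cyclicSweep]

lemma cyclicSweep_length (u v : PiLp 2 E) : cyclicSweep u v m = v := by
  ext l : 1; simp [cyclicSweep]

@[simp]
lemma cyclicSweep_apply_self (u v : PiLp 2 E) (i : Fin m) : cyclicSweep u v i i = u i := by
  simp [cyclicSweep]

lemma cyclicSweep_succ (u v : PiLp 2 E) (i : Fin m) :
    cyclicSweep u v (i + 1) = toLp 2 (update (cyclicSweep u v i) i (v i)) := by
  ext l : 1
  by_cases h : l = i
  · subst h; simp [cyclicSweep]
  · have hne : (l : ℕ) ≠ i := Fin.val_ne_of_ne h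
    simp only [cyclicSweep, update_of_ne h]
    congr 1
    exact propext (by omega)

lemma add_sum_le_of_cyclicSweep {f : PiLp 2 E → ℝ} {g : ∀ i, E i → ℝ} {a : Fin m → ℝ}
    (u v : PiLp 2 E)
    (h : ∀ i : Fin m,
      f (cyclicSweep u v (i + 1)) + g i (v i) ≤ f (cyclicSweep u v i) + g i (u i) + a i) :
    f v + ∑ i, g i (v i) ≤ f u + ∑ i, g i (u i) + ∑ i, a i := by
  have htelescope :
      ∑ i : Fin m, (f (cyclicSweep u v (i + 1)) - f (cyclicSweep u v i)) = f v - f u := by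
    rw [Fin.sum_univ_eq_sum_range (fun j => f (cyclicSweep u v (j + 1)) - f (cyclicSweep u v j)),
      Finset.sum_range_sub (fun j => f (cyclicSweep u v j)), cyclicSweep_length, cyclicSweep_zero]
  have hsum : ∑ i : Fin m, (f (cyclicSweep u v (i + 1)) - f (cyclicSweep u v i))
      ≤ ∑ i, (g i (u i) - g i (v i) + a i) :=
    Finset.sum_le_sum fun i _ => by linarith [h i]
  rw [htelescope, Finset.sum_add_distrib, Finset.sum_sub_distrib] at hsum
  linarith

end CyclicSweep

lemma inertial_coeff_le {K l c β β' γ γ' : ℝ} (hK : 0 < K) (hlK : l ≤ K) (hc0 : 0 < c)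
    (hc1 : c < 1) (hβ'β : β' ≤ β) (hβ : β < 1) (hγ : γ = 2 * (1 - β) * c / K)
    (hγ' : γ' = 2 * (1 - β') * c / K) :
    K / 2 - 1 / γ + β / (2 * γ) + β' / (2 * γ') ≤ -((1 - c) * l / (2 * c)) := by
  have hl : (1 - c) * l / (2 * c) ≤ (1 - c) * K / (2 * c) := by
    have := sub_pos.2 hc1
    gcongr
  have h1 : 0 < 1 - β := by linarith
  have h2 : 0 < 1 - β' := by linarith
  suffices K / 2 - 1 / γ + β / (2 * γ) + β' / (2 * γ') ≤ -((1 - c) * K / (2 * c)) by linarith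
  subst hγ hγ'
  field_simp
  nlinarith [mul_pos h1 h2, mul_pos hK hc0]

theorem pigd_stmt8
    {m : ℕ} (nn : Fin m → ℕ)
    (f F : PIGDSpace m nn → ℝ)
    (g : (i : Fin m) → EuclideanSpace ℝ (Fin (nn i)) → ℝ)
    (f' : PIGDSpace m nn → PIGDSpace m nn)
    (L : Fin m → ℝ) (hL : ∀ i, 0 < L i)
    (c : ℝ) (hc0 : 0 < c) (hc1 : c < 1)
    (hgconv : ∀ i, ConvexOn ℝ Set.univ (g i))
    (hf' : ∀ x, HasGradientAt f (f' x) x)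
    -- blockwise Lipschitz continuity of the block gradients
    (hlip : ∀ (i : Fin m) (x : PIGDSpace m nn) (u v : EuclideanSpace ℝ (Fin (nn i))),
      ‖f' (WithLp.toLp 2 (Function.update x i u)) i - f' (WithLp.toLp 2 (Function.update x i v)) i‖ ≤ L i * ‖u - v‖)
    (hF : ∀ x, F x = f x + ∑ i, g i (x i))
    (β γ : ℕ → Fin m → ℝ)
    (hβnonneg : ∀ k i, 0 ≤ β k i) (hβlt : ∀ k i, β k i < 1)
    (hβmono : ∀ k i, β (k + 1) i ≤ β k i)
    (hγ : ∀ k i, γ k i = 2 * (1 - β k i) * c / L i)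
    (prox : (i : Fin m) → ℝ → EuclideanSpace ℝ (Fin (nn i)) → EuclideanSpace ℝ (Fin (nn i)))
    (hprox : ∀ (i : Fin m) (γ' : ℝ) (y : EuclideanSpace ℝ (Fin (nn i))), 0 < γ' →
      IsMinOn (fun z => ‖z - y‖ ^ 2 / (2 * γ') + g i z) Set.univ (prox i γ' y))
    (x : ℤ → PIGDSpace m nn)
    -- `y k i` is the partially updated point whose blocks `j < i` are those of `x (k+1)`
    (y : ℕ → Fin m → PIGDSpace m nn)
    (hy : ∀ (k : ℕ) (i j : Fin m), y k i j = if (j : ℕ) < (i : ℕ) then x (k + 1) j else x k j)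
    -- cyclic coordinate PIGD iteration
    (hiter : ∀ (k : ℕ) (i : Fin m),
      x (k + 1) i
        = prox i (γ k i) (x k i - γ k i • f' (y k i) i + β k i • (x k i - x ((k : ℤ) - 1) i)))
    :
    ∀ k : ℕ,
      (F (x k) + ∑ i, β k i / (2 * γ k i) * ‖x k i - x ((k : ℤ) - 1) i‖ ^ 2)
        - (F (x (k + 1)) + ∑ i, β (k + 1) i / (2 * γ (k + 1) i) * ‖x (k + 1) i - x k i‖ ^ 2)
      ≥ (1 - c) * (⨅ i, L i) / (2 * c) * ‖x (k + 1) - x k‖ ^ 2 := by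
  intro k
  have hγpos (j : ℕ) (i : Fin m) : 0 < γ j i := by
    rw [hγ]; exact div_pos (mul_pos (mul_pos two_pos (sub_pos.2 (hβlt j i))) hc0) (hL i)
  have hsweep (i : Fin m) : y k i = cyclicSweep (x k) (x (k + 1)) i := by
    ext j : 1; exact hy k i j
  have hstep : ∀ i : Fin m, f (cyclicSweep (x k) (x (k + 1)) (i + 1)) + g i (x (k + 1) i)
      ≤ f (cyclicSweep (x k) (x (k + 1)) i) + g i (x k i)
        + ((L i / 2 - 1 / γ k i + β k i / (2 * γ k i)) * ‖x (k + 1) i - x k i‖ ^ 2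
          + β k i / (2 * γ k i) * ‖x k i - x ((k : ℤ) - 1) i‖ ^ 2) := fun i => by
    have h := inertial_block_prox_step_le hf' i (hlip i) (hgconv i) (hγpos k i) (hβnonneg k i)
      (cyclicSweep (x k) (x (k + 1)) i) (x (k - 1) i) (x (k + 1) i) (by
        rw [cyclicSweep_apply_self, ← hsweep, hiter k i]; exact hprox i _ _ (hγpos k i))
    rwa [← cyclicSweep_succ, cyclicSweep_apply_self, add_assoc] at h
  have hdescent := add_sum_le_of_cyclicSweep (x k) (x (k + 1)) hstep
  have hcoeff := fun i => inertial_coeff_le (hL i) (ciInf_le (Finite.bddBelow_range L) i) hc0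
    hc1 (hβmono k i) (hβlt k i) (hγ k i) (hγ (k + 1) i)
  have hsum := Finset.sum_le_sum fun i (_ : i ∈ Finset.univ) =>
    mul_le_mul_of_nonneg_right (hcoeff i) (sq_nonneg ‖x (k + 1) i - x k i‖)
  simp only [add_mul, Finset.sum_add_distrib, ← Finset.mul_sum] at hsum hdescent
  rw [hF, hF, PiLp.norm_sq_eq_of_L2]
  simp only [PiLp.sub_apply]
  linarith
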